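/- arXiv:1912.06530 — 3 statements merged into one kernel-verified Lean document; each statement's English description precedes it below -/
import Mathlib

section
/- Let F : C ⇄ D : U be an adjunction of symmetric monoidal categories where F is a (strong) symmetric monoidal functor. If P is a strongly dualizable object of C, then there is a natural isomorphism U(Y ⊗ F(P)) ≅ U(Y) ⊗ P for all Y in D. -/
open CategoryTheory MonoidalCategory

namespace ProjFormulaAux

open Functor.LaxMonoidal Functor.OplaxMonoidal

variable {C : Type*} {D : Type*} [Category C] [Category D]
  [MonoidalCategory C] [MonoidalCategory D]

/-- A strong monoidal functor sends exact pairings to exact pairings. -/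
noncomputable def mapExactPairing (F : C ⥤ D) [F.Monoidal] (X Y : C) [ExactPairing X Y] :
    ExactPairing (F.obj X) (F.obj Y) where
  coevaluation' := ε F ≫ F.map (η_ X Y) ≫ δ F X Y
  evaluation' := μ F Y X ≫ F.map (ε_ X Y) ≫ η F
  coevaluation_evaluation' := by
    simp only [MonoidalCategory.whiskerLeft_comp, comp_whiskerRight, Category.assoc]
    have key : F.obj Y ◁ δ F X Y ≫ (α_ (F.obj Y) (F.obj X) (F.obj Y)).inv ≫
          μ F Y X ▷ F.obj Y =
        μ F Y (X ⊗ Y) ≫ F.map (α_ Y X Y).inv ≫ δ F (Y ⊗ X) Y := by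
      rw [Functor.Monoidal.map_associator_inv]
      simp only [Category.assoc, Functor.Monoidal.μ_δ_assoc, Functor.Monoidal.μ_δ,
        Category.comp_id]
    slice_lhs 3 5 => rw [key]
    slice_lhs 2 3 => rw [Functor.LaxMonoidal.μ_natural_right]
    slice_lhs 5 6 => rw [Functor.OplaxMonoidal.δ_natural_left]
    slice_lhs 3 5 => rw [← F.map_comp, ← F.map_comp,
      ExactPairing.coevaluation_evaluation]
    rw [F.map_comp]
    slice_lhs 1 3 => rw [← Functor.LaxMonoidal.right_unitality]
    rw [Functor.Monoidal.map_leftUnitor_inv]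
    simp only [Category.assoc, Functor.Monoidal.μ_δ_assoc,
      Functor.Monoidal.whiskerRight_ε_η_assoc, Functor.Monoidal.whiskerRight_ε_η,
      Category.comp_id]
  evaluation_coevaluation' := by
    simp only [MonoidalCategory.whiskerLeft_comp, comp_whiskerRight, Category.assoc]
    have key : δ F X Y ▷ F.obj X ≫ (α_ (F.obj X) (F.obj Y) (F.obj X)).hom ≫
          F.obj X ◁ μ F Y X =
        μ F (X ⊗ Y) X ≫ F.map (α_ X Y X).hom ≫ δ F X (Y ⊗ X) := by
      rw [Functor.Monoidal.map_associator]
      simp only [Category.assoc, Functor.Monoidal.μ_δ_assoc, Functor.Monoidal.μ_δ,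
        Category.comp_id]
    slice_lhs 3 5 => rw [key]
    slice_lhs 2 3 => rw [Functor.LaxMonoidal.μ_natural_left]
    slice_lhs 5 6 => rw [Functor.OplaxMonoidal.δ_natural_right]
    slice_lhs 3 5 => rw [← F.map_comp, ← F.map_comp,
      ExactPairing.evaluation_coevaluation]
    rw [F.map_comp]
    slice_lhs 1 3 => rw [← Functor.LaxMonoidal.left_unitality]
    rw [Functor.Monoidal.map_rightUnitor_inv]
    simp only [Category.assoc, Functor.Monoidal.μ_δ_assoc,
      Functor.Monoidal.whiskerLeft_ε_η_assoc, Functor.Monoidal.whiskerLeft_ε_η,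
      Category.comp_id]

end ProjFormulaAux

/-- **Projection formula for dualizable objects.**
Let `F : C ⇄ D : U` be an adjunction of symmetric monoidal categories where `F` is a
(strong) symmetric monoidal functor.  If `P` is a strongly dualizable object of `C`
(i.e. it has a dual), then there is a natural isomorphism
`U (Y ⊗ F P) ≅ U Y ⊗ P`, naturally in `Y ∈ D`. -/
theorem projection_formula_of_dualizable
    {C : Type*} {D : Type*} [Category C] [Category D]
    [MonoidalCategory C] [MonoidalCategory D]
    [SymmetricCategory C] [SymmetricCategory D]
    (F : C ⥤ D) [F.Monoidal] [F.Braided] (U : D ⥤ C) (adj : F ⊣ U)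
    (P : C) [HasRightDual P] :
    Nonempty ((tensorRight (F.obj P) ⋙ U) ≅ (U ⋙ tensorRight P)) := by
  -- exact pairings
  letI e1 : ExactPairing P (Pᘁ) := inferInstance
  letI e2 : ExactPairing (Pᘁ) P := BraidedCategory.exactPairing_swap P (Pᘁ)
  letI e3 : ExactPairing (F.obj P) (F.obj (Pᘁ)) := ProjFormulaAux.mapExactPairing F P (Pᘁ)
  letI e4 : ExactPairing (F.obj (Pᘁ)) (F.obj P) := BraidedCategory.exactPairing_swap _ _
  -- adjunction `tensorRight Pᘁ ⋙ F ⊣ U ⋙ tensorRight P`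
  let adj2 : (tensorRight (Pᘁ) ⋙ F) ⊣ (U ⋙ tensorRight P) :=
    (tensorRightAdjunction (Pᘁ) P).comp adj
  -- adjunction `F ⋙ tensorRight (F Pᘁ) ⊣ tensorRight (F P) ⋙ U`
  let adj1 : (F ⋙ tensorRight (F.obj (Pᘁ))) ⊣ (tensorRight (F.obj P) ⋙ U) :=
    adj.comp (tensorRightAdjunction (F.obj (Pᘁ)) (F.obj P))
  -- the two left adjoints agree
  let adj1' : (tensorRight (Pᘁ) ⋙ F) ⊣ (tensorRight (F.obj P) ⋙ U) :=
    adj1.ofNatIsoLeft (Functor.Monoidal.commTensorRight F (Pᘁ))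
  exact ⟨adj1'.rightAdjointUniq adj2⟩
end

section
/- Abstract cancellation theorem: Let C be a symmetric monoidal 1-category and G ∈ C an n-symmetric object for some n ≥ 2 (the cyclic permutation on G^{⊗n} equals the identity). Suppose Σ_G = G ⊗ − admits a right adjoint Ω_G, and suppose the unit u : id_C → Ω_G Σ_G admits a retraction ρ in the category of lax C-module endofunctors. Then u and ρ are inverse natural isomorphisms. -/
open CategoryTheory MonoidalCategory

noncomputable section

variable {C : Type*} [Category C] [MonoidalCategory C] [SymmetricCategory C]

/-- Tensor powers `G^{⊗n}`. -/
def tpow (G : C) : ℕ → C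
  | 0 => 𝟙_ C
  | n + 1 => G ⊗ tpow G n

/-- The canonical isomorphism `G^{⊗n} ⊗ G ≅ G^{⊗(n+1)}`. -/
def shiftIso (G : C) : ∀ n : ℕ, tpow G n ⊗ G ≅ tpow G (n + 1)
  | 0 => (λ_ G) ≪≫ (ρ_ G).symm
  | n + 1 => (α_ G (tpow G n) G) ≪≫ whiskerLeftIso G (shiftIso G n)

/-- The cyclic permutation on `G^{⊗(n+1)}`, moving the first tensor factor to the end. -/
def cyc (G : C) (n : ℕ) : tpow G (n + 1) ⟶ tpow G (n + 1) :=
  (β_ G (tpow G n)).hom ≫ (shiftIso G n).hom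

/-- The canonical lax `C`-module structure map `X ⊗ Ω_G Σ_G Y ⟶ Ω_G Σ_G (X ⊗ Y)` of the
composite `Ω_G Σ_G`, where `Σ_G = G ⊗ −` and `Ω_G = O` is its right adjoint. -/
def modMap (G : C) (O : C ⥤ C) (adj : tensorLeft G ⊣ O) (X Y : C) :
    X ⊗ O.obj (G ⊗ Y) ⟶ O.obj (G ⊗ (X ⊗ Y)) :=
  (adj.homEquiv _ _)
    ((α_ G X (O.obj (G ⊗ Y))).inv ≫ ((β_ G X).hom ▷ O.obj (G ⊗ Y)) ≫
      (α_ X G (O.obj (G ⊗ Y))).hom ≫ (X ◁ adj.counit.app (G ⊗ Y)) ≫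
      (α_ X G Y).inv ≫ ((β_ X G).hom ▷ Y) ≫ (α_ G X Y).hom)

section AuxCancellation

variable (G : C) (O : C ⥤ C)

/-- Whiskering by `G` is "faithful" as soon as the unit of the adjunction admits a
retraction. -/
theorem aux_cancel_whiskerLeft (adj : tensorLeft G ⊣ O) (ρ : (tensorLeft G ⋙ O) ⟶ 𝟭 C)
    (hret' : ∀ A : C, adj.unit.app A ≫ ρ.app A = 𝟙 A)
    {A B : C} (h h' : A ⟶ B) (e : G ◁ h = G ◁ h') : h = h' := by
  have nat : ∀ x : A ⟶ B, adj.unit.app A ≫ O.map (G ◁ x) = x ≫ adj.unit.app B := by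
    intro x
    simpa using (adj.unit.naturality x).symm
  have e2 : h ≫ adj.unit.app B = h' ≫ adj.unit.app B := by
    rw [← nat, ← nat, e]
  have e3 := congrArg (fun t => t ≫ ρ.app B) e2
  simpa [Category.assoc, hret' B] using e3

/-- Whiskering by any tensor power of `G` is "faithful". -/
theorem aux_cancel_tpow (adj : tensorLeft G ⊣ O) (ρ : (tensorLeft G ⋙ O) ⟶ 𝟭 C)
    (hret' : ∀ A : C, adj.unit.app A ≫ ρ.app A = 𝟙 A) :
    ∀ (k : ℕ) {A B : C} (h h' : A ⟶ B), tpow G k ◁ h = tpow G k ◁ h' → h = h' := by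
  intro k
  induction k with
  | zero =>
    intro A B h h' e
    have e' : (𝟙_ C) ◁ h = (𝟙_ C) ◁ h' := e
    simp only [MonoidalCategory.id_whiskerLeft] at e'
    simpa using e'
  | succ k ih =>
    intro A B h h' e
    have e' : (G ⊗ tpow G k) ◁ h = (G ⊗ tpow G k) ◁ h' := e
    refine ih _ _ (aux_cancel_whiskerLeft G O adj ρ hret' _ _ ?_)
    have conj : ∀ x : A ⟶ B,
        G ◁ (tpow G k ◁ x) = (α_ G (tpow G k) A).inv ≫ ((G ⊗ tpow G k) ◁ x) ≫
          (α_ G (tpow G k) B).hom := by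
      intro x; monoidal
    rw [conj, conj, e']

/-- Structure of the exchange argument: conjugating a whiskered morphism by a
braiding-like isomorphism. -/
theorem aux_exchange {P Z Y : C} (s : P ⊗ G ⟶ G ⊗ P) (s' : G ⊗ P ⟶ P ⊗ G)
    (hs : s ≫ s' = 𝟙 _) (r : Z ⟶ Y) :
    (α_ P G Z).inv ≫ (s ▷ Z) ≫ ((G ⊗ P) ◁ r) ≫ (s' ▷ Y) ≫ (α_ P G Y).hom
      = P ◁ (G ◁ r) := by
  rw [← whisker_exchange_assoc]
  have : (s ▷ Y) ≫ (s' ▷ Y) = 𝟙 _ := by rw [← comp_whiskerRight, hs, id_whiskerRight]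
  calc (α_ P G Z).inv ≫ (P ⊗ G) ◁ r ≫ s ▷ Y ≫ s' ▷ Y ≫ (α_ P G Y).hom
      = (α_ P G Z).inv ≫ ((P ⊗ G) ◁ r) ≫ ((s ▷ Y) ≫ (s' ▷ Y)) ≫ (α_ P G Y).hom := by
        simp only [Category.assoc]
    _ = (α_ P G Z).inv ≫ ((P ⊗ G) ◁ r) ≫ (α_ P G Y).hom := by rw [this, Category.id_comp]
    _ = P ◁ (G ◁ r) := by monoidal

/-- The main computation: if the braiding of `G` with `G ⊗ P` is given by the shift
isomorphism (i.e. the cyclic symmetry), then the module compatibility of `ρ` forces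
`G ◁ ρ = ε` after whiskering by `P`. -/
theorem aux_main (adj : tensorLeft G ⊣ O) (ρ : (tensorLeft G ⋙ O) ⟶ 𝟭 C)
    (hret' : ∀ A : C, adj.unit.app A ≫ ρ.app A = 𝟙 A)
    (P : C) (s : P ⊗ G ≅ G ⊗ P)
    (hb : (β_ G (G ⊗ P)).hom = (G ◁ s.inv) ≫ (α_ G P G).inv)
    (hb' : (β_ (G ⊗ P) G).hom = (α_ G P G).hom ≫ (G ◁ s.hom))
    (Y : C)
    (hmodY : modMap G O adj (G ⊗ P) Y ≫ ρ.app ((G ⊗ P) ⊗ Y) = (G ⊗ P) ◁ ρ.app Y) :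
    P ◁ (G ◁ ρ.app Y) = P ◁ adj.counit.app (G ⊗ Y) := by
  set Z := O.obj (G ⊗ Y) with hZ
  set ε := adj.counit.app (G ⊗ Y) with hε
  set f : (G ⊗ P) ⊗ Z ⟶ (G ⊗ P) ⊗ Y :=
    (s.inv ▷ Z) ≫ (α_ P G Z).hom ≫ (P ◁ ε) ≫ (α_ P G Y).inv ≫ (s.hom ▷ Y) with hf
  have h1 : modMap G O adj (G ⊗ P) Y = (adj.homEquiv _ _) (G ◁ f) := by
    unfold modMap
    congr 1
    rw [hb, hb', hf]
    monoidal
  have h2 : modMap G O adj (G ⊗ P) Y ≫ ρ.app ((G ⊗ P) ⊗ Y) = f := by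
    rw [h1, Adjunction.homEquiv_unit]
    have h3 : O.map ((tensorLeft G).map f) ≫ ρ.app ((G ⊗ P) ⊗ Y)
        = ρ.app ((G ⊗ P) ⊗ Z) ≫ f := by
      simpa using ρ.naturality f
    have h3' : O.map (G ◁ f) ≫ ρ.app ((G ⊗ P) ⊗ Y) = ρ.app ((G ⊗ P) ⊗ Z) ≫ f := h3
    rw [Category.assoc, h3', ← Category.assoc, hret', Category.id_comp]
  have h4 : f = (G ⊗ P) ◁ ρ.app Y := h2.symm.trans hmodY
  -- Now conjugate back.
  have h5 : P ◁ (G ◁ ρ.app Y)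
      = (α_ P G Z).inv ≫ (s.hom ▷ Z) ≫ ((G ⊗ P) ◁ ρ.app Y) ≫ (s.inv ▷ Y) ≫
        (α_ P G Y).hom :=
    (aux_exchange G s.hom s.inv s.hom_inv_id (ρ.app Y)).symm
  rw [h5, ← h4, hf]
  simp

end AuxCancellation

/-- **Abstract cancellation theorem** (Voevodsky).  Let `C` be a symmetric monoidal
category and `G ∈ C` an `n`-symmetric object for some `n ≥ 2` (the cyclic permutation on
`G^{⊗n}` is the identity).  Suppose `Σ_G = G ⊗ −` has a right adjoint `Ω_G = O`, and the
unit `u : id → Ω_G Σ_G` admits a retraction `ρ` which is a lax `C`-module transformation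
(for the canonical lax module structure).  Then `u` and `ρ` are inverse isomorphisms. -/
theorem abstract_cancellation
    (G : C) (O : C ⥤ C) (adj : tensorLeft G ⊣ O)
    (hsym : ∃ n : ℕ, 1 ≤ n ∧ cyc G n = 𝟙 (tpow G (n + 1)))
    (ρ : (tensorLeft G ⋙ O) ⟶ 𝟭 C)
    (hret : adj.unit ≫ ρ = 𝟙 (𝟭 C))
    (hmod : ∀ X Y : C, modMap G O adj X Y ≫ ρ.app (X ⊗ Y) = X ◁ ρ.app Y) :
    ∀ X : C, adj.unit.app X ≫ ρ.app X = 𝟙 X ∧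
      ρ.app X ≫ adj.unit.app X = 𝟙 ((tensorLeft G ⋙ O).obj X) := by
  obtain ⟨n, hn, hcyc⟩ := hsym
  obtain ⟨k, rfl⟩ : ∃ k, n = k + 1 := ⟨n - 1, by omega⟩
  have hret' : ∀ A : C, adj.unit.app A ≫ ρ.app A = 𝟙 A := by
    intro A
    have := congrArg (fun t => t.app A) hret
    simpa using this
  have hβ1 : (β_ G (tpow G (k + 1))).hom = (shiftIso G (k + 1)).inv := by
    have h := hcyc
    unfold cyc at h
    exact (Iso.comp_hom_eq_id _).mp h
  have hb : (β_ G (G ⊗ tpow G k)).hom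
      = (G ◁ (shiftIso G k).inv) ≫ (α_ G (tpow G k) G).inv := hβ1
  have hβ2 : (β_ (tpow G (k + 1)) G).hom = (shiftIso G (k + 1)).hom := by
    have h := SymmetricCategory.symmetry (tpow G (k + 1)) G
    rw [hβ1] at h
    exact (Iso.comp_inv_eq_id _).mp h
  have hb' : (β_ (G ⊗ tpow G k) G).hom
      = (α_ G (tpow G k) G).hom ≫ (G ◁ (shiftIso G k).hom) := hβ2
  intro Y
  refine ⟨hret' Y, ?_⟩
  have hkey := aux_main G O adj ρ hret' (tpow G k) (shiftIso G k) hb hb' Y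
    (hmod (tpow G (k + 1)) Y)
  have hGρ : G ◁ ρ.app Y = adj.counit.app (G ⊗ Y) :=
    aux_cancel_tpow G O adj ρ hret' k _ _ hkey
  have nat2 : adj.unit.app (O.obj (G ⊗ Y)) ≫ O.map (G ◁ ρ.app Y)
      = ρ.app Y ≫ adj.unit.app Y := by
    simpa using (adj.unit.naturality (ρ.app Y)).symm
  show ρ.app Y ≫ adj.unit.app Y = 𝟙 ((tensorLeft G ⋙ O).obj Y)
  rw [← nat2, hGρ]
  exact adj.right_triangle_components (G ⊗ Y)


end
end

section
/- Let X ← Z → G × X' be correspondences and consider the symmetric monoidal structure on a span category. Given a span α : A × G ← C → G, define ρ_α(Z) = Z ×_{G×G} C (fiber product over the two projections to G). Then ρ_α is functorial: for a morphism Z' : X' → X'' acting by postcomposition on the G-component-free leg, ρ_α((id_G ⊗ Z') ∘ Z) ≅ (id_A ⊗ Z') ∘ ρ_α(Z), and similarly for precomposition. -/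
open CategoryTheory Limits

noncomputable section

variable {C : Type*} [Category C] [HasPullbacks C] [HasBinaryProducts C]

/-- The map `Z ⟶ G ⨯ G` given by the two `G`-components of a span `G ⨯ Y ← Z → G ⨯ X`. -/
def toGG {Z Y X G : C} (zl : Z ⟶ G ⨯ Y) (zr : Z ⟶ G ⨯ X) : Z ⟶ G ⨯ G :=
  prod.lift (zl ≫ prod.fst) (zr ≫ prod.fst)

/-- The map `C ⟶ G ⨯ G` given by the two `G`-components of a span `A ⨯ G ← C → G`. -/
def alphaToGG {Cc A G : C} (cl : Cc ⟶ A ⨯ G) (cr : Cc ⟶ G) : Cc ⟶ G ⨯ G :=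
  prod.lift (cl ≫ prod.snd) cr

/-- `ρ_α(Z) := Z ×_{G ⨯ G} C`, for a span `Z` from `G ⨯ Y` to `G ⨯ X` and
`α = (A ⨯ G ← C → G)`. -/
def rhoObj {Z Y X G Cc A : C} (zl : Z ⟶ G ⨯ Y) (zr : Z ⟶ G ⨯ X)
    (cl : Cc ⟶ A ⨯ G) (cr : Cc ⟶ G) : C :=
  pullback (toGG zl zr) (alphaToGG cl cr)

/-- The left leg `ρ_α(Z) ⟶ A ⨯ Y`. -/
def rhoLeft {Z Y X G Cc A : C} (zl : Z ⟶ G ⨯ Y) (zr : Z ⟶ G ⨯ X)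
    (cl : Cc ⟶ A ⨯ G) (cr : Cc ⟶ G) : rhoObj zl zr cl cr ⟶ A ⨯ Y :=
  prod.lift (pullback.snd (toGG zl zr) (alphaToGG cl cr) ≫ cl ≫ prod.fst)
    (pullback.fst (toGG zl zr) (alphaToGG cl cr) ≫ zl ≫ prod.snd)

/-- The right leg `ρ_α(Z) ⟶ X`. -/
def rhoRight {Z Y X G Cc A : C} (zl : Z ⟶ G ⨯ Y) (zr : Z ⟶ G ⨯ X)
    (cl : Cc ⟶ A ⨯ G) (cr : Cc ⟶ G) : rhoObj zl zr cl cr ⟶ X :=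
  pullback.fst (toGG zl zr) (alphaToGG cl cr) ≫ zr ≫ prod.snd

/-! Everything is pullback pasting. Composing `Z` with `id_G ⊗ Z'` on either side does not
change its two `G`-components, so `ρ_α` of the composite is the pullback of `ρ_α(Z)` along the
comparison map of spans. Since `G ⨯ Z' → Z'` is a pullback of `G ⨯ X₁ → X₁`, the composite
`Z ×_{G ⨯ X₁} (G ⨯ Z')` is `Z ×_{X₁} Z'`, and pasting identifies `ρ_α((id_G ⊗ Z') ∘ Z)` with
`ρ_α(Z) ×_{X₁} Z'`. For precomposition the same square is obtained over `Y`, and pulling back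
`A ⨯ Z'' → A ⨯ Y` along a map into `A ⨯ Y` only involves its `Y`-component. -/

attribute [local simp] prod.lift_fst prod.lift_snd
  pullback.lift_fst pullback.lift_snd pullback.lift_fst_assoc pullback.lift_snd_assoc

namespace CategoryTheory

variable {D : Type*} [Category D]

theorem IsPullback.of_prod_snd_with_id [HasBinaryProducts D] {X Y : D} (f : X ⟶ Y) (Z : D) :
    IsPullback prod.snd (prod.map (𝟙 Z) f) f prod.snd := by
  refine IsPullback.mk' (by simp) (fun T φ φ' h₁ h₂ => ?_) (fun T a b w => ?_)
  · ext
    · simpa using h₂ =≫ prod.fst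
    · exact h₁
  · exact ⟨prod.lift (b ≫ prod.fst) a, by simp, by ext <;> simp [w]⟩

theorem IsPullback.prodLift_prodMap_id [HasBinaryProducts D] {P R Z Y : D} {b : P ⟶ R}
    {c : P ⟶ Z} {v : R ⟶ Y} {h : Z ⟶ Y} (hp : IsPullback b c v h) {A : D} (u : R ⟶ A) :
    IsPullback (prod.lift (b ≫ u) c) b (prod.map (𝟙 A) h) (prod.lift u v) := by
  refine IsPullback.of_right ?_ (by ext <;> simp [hp.w]) (IsPullback.of_prod_snd_with_id h A)
  simpa using hp.flip

theorem isPullback_pullbackMap_fst [HasPullbacks D] {W Z S T : D} {F : W ⟶ S} {p : W ⟶ Z}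
    {f : Z ⟶ S} (hF : F = p ≫ f) (g : T ⟶ S) :
    IsPullback (pullback.map F g f g p (𝟙 T) (𝟙 S) (by simp [hF]) (by simp))
      (pullback.fst F g) (pullback.fst f g) p := by
  subst hF
  refine IsPullback.of_right ?_ (by simp) (IsPullback.of_hasPullback f g).flip
  simpa using (IsPullback.of_hasPullback (p ≫ f) g).flip

end CategoryTheory

theorem toGG_eq_comp {D : Type*} [Category D] [HasBinaryProducts D] {W Z Y X Y' X' G : D}
    {zl : Z ⟶ G ⨯ Y} {zr : Z ⟶ G ⨯ X} {wl : W ⟶ G ⨯ Y'} {wr : W ⟶ G ⨯ X'} (p : W ⟶ Z)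
    (hl : wl ≫ prod.fst = p ≫ zl ≫ prod.fst) (hr : wr ≫ prod.fst = p ≫ zr ≫ prod.fst) :
    toGG wl wr = p ≫ toGG zl zr := by
  ext <;> simp [toGG, hl, hr]

section

variable {W Z Y X Y' X' G Cc A : C} {zl : Z ⟶ G ⨯ Y} {zr : Z ⟶ G ⨯ X}

def rhoMap {wl : W ⟶ G ⨯ Y'} {wr : W ⟶ G ⨯ X'} (cl : Cc ⟶ A ⨯ G) (cr : Cc ⟶ G) (p : W ⟶ Z)
    (hp : toGG wl wr = p ≫ toGG zl zr) : rhoObj wl wr cl cr ⟶ rhoObj zl zr cl cr :=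
  pullback.map _ _ _ _ p (𝟙 Cc) (𝟙 _) (by simp [hp]) (by simp)

theorem isPullback_rhoMap {wl : W ⟶ G ⨯ Y'} {wr : W ⟶ G ⨯ X'} (cl : Cc ⟶ A ⨯ G)
    (cr : Cc ⟶ G) (p : W ⟶ Z) (hp : toGG wl wr = p ≫ toGG zl zr) :
    IsPullback (rhoMap cl cr p hp) (pullback.fst _ _) (pullback.fst _ _) p :=
  isPullback_pullbackMap_fst hp _

theorem rhoMap_rhoLeft {wr : W ⟶ G ⨯ X'} (cl : Cc ⟶ A ⨯ G) (cr : Cc ⟶ G) (p : W ⟶ Z)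
    (hp : toGG (p ≫ zl) wr = p ≫ toGG zl zr) :
    rhoMap cl cr p hp ≫ rhoLeft zl zr cl cr = rhoLeft (p ≫ zl) wr cl cr := by
  ext <;> simp [rhoMap, rhoLeft, rhoObj]

theorem rhoMap_rhoRight {wl : W ⟶ G ⨯ Y'} (cl : Cc ⟶ A ⨯ G) (cr : Cc ⟶ G) (p : W ⟶ Z)
    (hp : toGG wl (p ≫ zr) = p ≫ toGG zl zr) :
    rhoMap cl cr p hp ≫ rhoRight zl zr cl cr = rhoRight wl (p ≫ zr) cl cr := by
  simp [rhoMap, rhoRight, rhoObj]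

end

section

variable {Z Y X₁ X₂ Y' G Cc A Z' Z'' : C} (zl : Z ⟶ G ⨯ Y) (zr : Z ⟶ G ⨯ X₁)
  (cl : Cc ⟶ A ⨯ G) (cr : Cc ⟶ G)

theorem toGG_postcomp (z'l : Z' ⟶ X₁) (z'r : Z' ⟶ X₂) :
    toGG (pullback.fst zr (prod.map (𝟙 G) z'l) ≫ zl)
        (pullback.snd zr (prod.map (𝟙 G) z'l) ≫ prod.map (𝟙 G) z'r) =
      pullback.fst zr (prod.map (𝟙 G) z'l) ≫ toGG zl zr :=
  toGG_eq_comp _ (Category.assoc _ _ _) (by simp [pullback.condition_assoc])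

theorem toGG_precomp (z''l : Z'' ⟶ Y') (z''r : Z'' ⟶ Y) :
    toGG (pullback.fst (prod.map (𝟙 G) z''r) zl ≫ prod.map (𝟙 G) z''l)
        (pullback.snd (prod.map (𝟙 G) z''r) zl ≫ zr) =
      pullback.snd (prod.map (𝟙 G) z''r) zl ≫ toGG zl zr :=
  toGG_eq_comp _ (by simp [← pullback.condition_assoc]) (Category.assoc _ _ _)

theorem isPullback_rho_postcomp (z'l : Z' ⟶ X₁) (z'r : Z' ⟶ X₂) :
    IsPullback (rhoMap cl cr _ (toGG_postcomp zl zr z'l z'r))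
      (pullback.fst _ _ ≫ pullback.snd zr (prod.map (𝟙 G) z'l) ≫ prod.snd)
      (rhoRight zl zr cl cr) z'l :=
  (isPullback_rhoMap cl cr _ _).paste_vert
    ((IsPullback.of_hasPullback _ _).paste_vert (IsPullback.of_prod_snd_with_id z'l G).flip)

theorem isPullback_rho_precomp (z''l : Z'' ⟶ Y') (z''r : Z'' ⟶ Y) :
    IsPullback
      (prod.lift (rhoMap cl cr _ (toGG_precomp zl zr z''l z''r) ≫ pullback.snd _ _ ≫ cl ≫ prod.fst)
        (pullback.fst _ _ ≫ pullback.fst (prod.map (𝟙 G) z''r) zl ≫ prod.snd))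
      (rhoMap cl cr _ (toGG_precomp zl zr z''l z''r)) (prod.map (𝟙 A) z''r)
      (rhoLeft zl zr cl cr) :=
  ((isPullback_rhoMap cl cr _ _).paste_vert
    ((IsPullback.of_hasPullback _ _).flip.paste_vert
      (IsPullback.of_prod_snd_with_id z''r G).flip)).prodLift_prodMap_id _

end

/-- **Functoriality of `ρ_α` for spans** (composition on either side by `id ⊗ Z'`).

(1) For a span `Z' = (X₁ ← Z' → X₂)` acting by postcomposition on the `G`-free leg:
`ρ_α((id_G ⊗ Z') ∘ Z) ≅ Z' ∘ ρ_α(Z)`, compatibly with both legs.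

(2) For a span `Z'' = (Y' ← Z'' → Y)` acting by precomposition:
`ρ_α(Z ∘ (id_G ⊗ Z'')) ≅ ρ_α(Z) ∘ (id_A ⊗ Z'')`, compatibly with both legs. -/
theorem rho_compatible_with_composition
    {Z Y X₁ X₂ Y' G Cc A Z' Z'' : C}
    (zl : Z ⟶ G ⨯ Y) (zr : Z ⟶ G ⨯ X₁)
    (cl : Cc ⟶ A ⨯ G) (cr : Cc ⟶ G)
    (z'l : Z' ⟶ X₁) (z'r : Z' ⟶ X₂)
    (z''l : Z'' ⟶ Y') (z''r : Z'' ⟶ Y) :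
    (∃ e : rhoObj (C := C)
          (pullback.fst zr (prod.map (𝟙 G) z'l) ≫ zl)
          (pullback.snd zr (prod.map (𝟙 G) z'l) ≫ prod.map (𝟙 G) z'r) cl cr ≅
        pullback (rhoRight zl zr cl cr) z'l,
      e.hom ≫ pullback.fst (rhoRight zl zr cl cr) z'l ≫ rhoLeft zl zr cl cr =
        rhoLeft (pullback.fst zr (prod.map (𝟙 G) z'l) ≫ zl)
          (pullback.snd zr (prod.map (𝟙 G) z'l) ≫ prod.map (𝟙 G) z'r) cl cr ∧
      e.hom ≫ pullback.snd (rhoRight zl zr cl cr) z'l ≫ z'r =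
        rhoRight (pullback.fst zr (prod.map (𝟙 G) z'l) ≫ zl)
          (pullback.snd zr (prod.map (𝟙 G) z'l) ≫ prod.map (𝟙 G) z'r) cl cr) ∧
    (∃ e : rhoObj (C := C)
          (pullback.fst (prod.map (𝟙 G) z''r) zl ≫ prod.map (𝟙 G) z''l)
          (pullback.snd (prod.map (𝟙 G) z''r) zl ≫ zr) cl cr ≅
        pullback (prod.map (𝟙 A) z''r) (rhoLeft zl zr cl cr),
      e.hom ≫ pullback.fst (prod.map (𝟙 A) z''r) (rhoLeft zl zr cl cr) ≫
          prod.map (𝟙 A) z''l =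
        rhoLeft (pullback.fst (prod.map (𝟙 G) z''r) zl ≫ prod.map (𝟙 G) z''l)
          (pullback.snd (prod.map (𝟙 G) z''r) zl ≫ zr) cl cr ∧
      e.hom ≫ pullback.snd (prod.map (𝟙 A) z''r) (rhoLeft zl zr cl cr) ≫
          rhoRight zl zr cl cr =
        rhoRight (pullback.fst (prod.map (𝟙 G) z''r) zl ≫ prod.map (𝟙 G) z''l)
          (pullback.snd (prod.map (𝟙 G) z''r) zl ≫ zr) cl cr) := by
  refine ⟨⟨(isPullback_rho_postcomp zl zr cl cr z'l z'r).isoPullback, ?_, ?_⟩,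
    ⟨(isPullback_rho_precomp zl zr cl cr z''l z''r).isoPullback, ?_, ?_⟩⟩
  · rw [IsPullback.isoPullback_hom_fst_assoc, rhoMap_rhoLeft]
  · rw [IsPullback.isoPullback_hom_snd_assoc]
    simp [rhoRight, rhoObj]
  · rw [IsPullback.isoPullback_hom_fst_assoc]
    ext <;> simp [rhoLeft, rhoMap, rhoObj]
  · rw [IsPullback.isoPullback_hom_snd_assoc, rhoMap_rhoRight]

end
end
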